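/- arXiv:1605.07240 — 4 statements merged into one kernel-verified Lean document; each statement's English description precedes it below -/
import Mathlib

section
/- In the setting of the minimal choice construction: for every (x₀,z₀) ∈ X×Z, define R(c|x₀,z₀) = −Σ_{(x',z')∈X×Z} R(x',z'|x₀,z₀) and R(x₀,z₀|c) = −(1/ε)·Σ_{(x,z)∈X×Z} R(x₀,z₀|x,z)·g(x,z), where R is built with the minimal τ_ε. Then R(c|x₀,z₀) ≥ 0, R(x₀,z₀|c) ≥ 0, and R(c|x₀,z₀)·R(x₀,z₀|c) = 0; that is, for each state of the natural space at most one of the two rates (into the transition state c, out of the transition state c) is nonzero. -/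
/- STATEMENT 4: In the minimal choice construction, the rates into and out of the
transition state c, R(c|x₀,z₀) = −Σ_{(x',z')} R(x',z'|x₀,z₀) and
R(x₀,z₀|c) = −(1/ε)·Σ_{(x,z)} R(x₀,z₀|x,z)·g(x,z), are both nonnegative and at most
one of them is nonzero (their product vanishes), for every (x₀,z₀). -/
theorem stmt4
    {X Z : Type*} [Fintype X] [Fintype Z] [Nonempty X] [Nonempty Z]
    [DecidableEq X] [DecidableEq Z]
    (Q : Z → X → X → ℝ) (A : X → Z → Z → ℝ)
    (m : Z → X → ℝ) (ν : X → Z → ℝ)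
    (hQoff : ∀ z x' x, x' ≠ x → 0 ≤ Q z x' x)
    (hQdiag : ∀ z x, Q z x x < 0)
    (hQsum : ∀ z x, ∑ x', Q z x' x = 0)
    (hm : ∀ z x, 0 < m z x)
    (hmstat : ∀ z x', ∑ x, Q z x' x * m z x = 0)
    (hAoff : ∀ x z' z, z' ≠ z → 0 ≤ A x z' z)
    (hAdiag : ∀ x z, A x z z < 0)
    (hAsum : ∀ x z, ∑ z', A x z' z = 0)
    (hν : ∀ x z, 0 < ν x z)
    (hνstat : ∀ x z', ∑ z, A x z' z * ν x z = 0)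
    (ε : ℝ) (hε : 0 < ε) :
    let g : X × Z → ℝ := fun p => m p.2 p.1 * ν p.1 p.2
    let D : X × Z → ℝ := fun p => A p.1 p.2 p.2 * Q p.2 p.1 p.1
    let τ : X × Z → ℝ := fun p => max
      ((∑ s ∈ Finset.univ.erase p, |A s.1 p.2 s.2 * Q s.2 p.1 s.1| * g s) / (D p * g p))
      ((∑ s ∈ Finset.univ.erase p, |A p.1 s.2 p.2 * Q p.2 s.1 p.1|) / D p)
    let R : X × Z → X × Z → ℝ := fun s p =>
      if s = p then -τ p * |D p| else |A p.1 s.2 p.2 * Q p.2 s.1 p.1|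
    let RcIn : X × Z → ℝ := fun p => -∑ s : X × Z, R s p
    let RcOut : X × Z → ℝ := fun p => -(1 / ε) * ∑ s : X × Z, R p s * g s
    ∀ p : X × Z, 0 ≤ RcIn p ∧ 0 ≤ RcOut p ∧ RcIn p * RcOut p = 0 := by
  intro g D τ R RcIn RcOut p
  have hDpos : 0 < D p := mul_pos_of_neg_of_neg (hAdiag p.1 p.2) (hQdiag p.2 p.1)
  have hgpos : 0 < g p := mul_pos (hm p.2 p.1) (hν p.1 p.2)
  have habs : |D p| = D p := abs_of_pos hDpos
  set S1 : ℝ := ∑ s ∈ Finset.univ.erase p, |A s.1 p.2 s.2 * Q s.2 p.1 s.1| * g s with hS1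
  set S2 : ℝ := ∑ s ∈ Finset.univ.erase p, |A p.1 s.2 p.2 * Q p.2 s.1 p.1| with hS2
  have hτ : τ p = max (S1 / (D p * g p)) (S2 / D p) := rfl
  have hIn : RcIn p = τ p * D p - S2 := by
    have hsum : ∑ s : X × Z, R s p = -τ p * |D p| + S2 := by
      rw [← Finset.add_sum_erase _ _ (Finset.mem_univ p)]
      congr 1
      · show (if p = p then -τ p * |D p| else _) = _
        rw [if_pos rfl]
      · exact Finset.sum_congr rfl fun s hs => if_neg (Finset.ne_of_mem_erase hs)
    show -∑ s : X × Z, R s p = _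
    rw [hsum, habs]; ring
  have hOut : RcOut p = (1 / ε) * (τ p * D p * g p - S1) := by
    have hsum : ∑ s : X × Z, R p s * g s = -τ p * |D p| * g p + S1 := by
      rw [← Finset.add_sum_erase _ _ (Finset.mem_univ p)]
      congr 1
      · show (if p = p then -τ p * |D p| else _) * g p = _
        rw [if_pos rfl]
      · exact Finset.sum_congr rfl fun s hs => by
          show (if p = s then -τ s * |D s| else |A s.1 p.2 s.2 * Q s.2 p.1 s.1|) * g s = _
          rw [if_neg (Finset.ne_of_mem_erase hs).symm]
    show -(1 / ε) * ∑ s : X × Z, R p s * g s = _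
    rw [hsum, habs]; ring
  have hb : S2 / D p * D p = S2 := div_mul_cancel₀ _ hDpos.ne'
  have ha : S1 / (D p * g p) * (D p * g p) = S1 :=
    div_mul_cancel₀ _ (mul_pos hDpos hgpos).ne'
  have hInge : 0 ≤ RcIn p := by
    rw [hIn]
    have : S2 / D p * D p ≤ τ p * D p :=
      mul_le_mul_of_nonneg_right (le_max_right _ _) hDpos.le
    rw [hb] at this
    linarith
  have hOutge : 0 ≤ RcOut p := by
    rw [hOut]
    have : S1 / (D p * g p) * (D p * g p) ≤ τ p * (D p * g p) :=
      mul_le_mul_of_nonneg_right (le_max_left _ _) (mul_pos hDpos hgpos).le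
    rw [ha] at this
    have h2 : 0 ≤ τ p * D p * g p - S1 := by nlinarith
    positivity
  refine ⟨hInge, hOutge, ?_⟩
  rcases max_choice (S1 / (D p * g p)) (S2 / D p) with h | h
  · have : RcOut p = 0 := by
      rw [hOut, hτ, h]
      have := ha
      field_simp
      nlinarith [ha]
    rw [this, mul_zero]
  · have : RcIn p = 0 := by
      rw [hIn, hτ, h, hb]; ring
    rw [this, zero_mul]
end

section
/- In the queueing construction, for every i with 3 ≤ i ≤ N−1 and every j with 1 ≤ j ≤ M−1, one has the lower bound Σ_{(i',μ_{j'}) ≠ (i,μ_j)} |A^{i'}(μ_j|μ_{j'})·Q^{μ_j}(i|i')|·g(i',μ_{j'}) ≥ (i−1)·g(i−1,μ_j). -/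
noncomputable section

/-- `μ_j = 1/2 + j/M`. -/
def μval (M j : ℕ) : ℝ := 1 / 2 + (j : ℝ) / (M : ℝ)

/-- The queueing generator `Q^μ`; `Qq N μ i' i = Q^μ(i'|i)`. -/
def Qq (N : ℕ) (μ : ℝ) (i' i : Fin (N + 1)) : ℝ :=
  if i'.val = i.val + 1 then 1
  else if i'.val + 1 = i.val then μ
  else if i' = i then -((if i.val < N then (1 : ℝ) else 0) + (if 0 < i.val then μ else 0))
  else 0

/-- Upward jump rate of `A^i` (`i` for `i ≥ 1`, `1/M²` for `i = 0`). -/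
def upRate (M i : ℕ) : ℝ := if i = 0 then ((M : ℝ) ^ 2)⁻¹ else (i : ℝ)

/-- The environment generator `A^i`; `Aq M i j' j = A^i(μ_{j'}|μ_j)`. -/
def Aq (M i : ℕ) (j' j : Fin (M + 1)) : ℝ :=
  if j'.val = j.val + 1 then upRate M i
  else if j'.val + 1 = j.val then 1
  else if j' = j then -((if j.val < M then upRate M i else 0) + (if 0 < j.val then (1 : ℝ) else 0))
  else 0

/-- `η(μ) = Σ_{i=0}^{N} μ^{−i}`. -/
def ηq (N : ℕ) (μ : ℝ) : ℝ := ∑ k ∈ Finset.range (N + 1), μ⁻¹ ^ k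

/-- `m^μ(i) = μ^{−i}/η(μ)`. -/
def mq (N : ℕ) (μ : ℝ) (i : Fin (N + 1)) : ℝ := μ⁻¹ ^ i.val / ηq N μ

/-- `σ(i) = Σ_{j=0}^{M} i^j` for `i ≥ 1`, and `σ(0) = Σ_{j=0}^{M} M^{−2j}`. -/
def σq (M i : ℕ) : ℝ := ∑ j ∈ Finset.range (M + 1), upRate M i ^ j

/-- `ν^i(μ_j) = i^j/σ(i)` for `i ≥ 1`, and `ν^0(μ_j) = M^{−2j}/σ(0)`. -/
def νq (M i : ℕ) (j : Fin (M + 1)) : ℝ := upRate M i ^ j.val / σq M i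

/-- The product measure `g(i,μ_j) = m^{μ_j}(i)·ν^i(μ_j)`. -/
def gq (N M : ℕ) (p : Fin (N + 1) × Fin (M + 1)) : ℝ :=
  mq N (μval M p.2.val) p.1 * νq M p.1.val p.2

/- STATEMENT 10: for `3 ≤ i ≤ N−1`, `1 ≤ j ≤ M−1`, the column-sum lower bound
Σ_{(i',μ_{j'}) ≠ (i,μ_j)} |A^{i'}(μ_j|μ_{j'})·Q^{μ_j}(i|i')|·g(i',μ_{j'}) ≥ (i−1)·g(i−1,μ_j). -/
-- aux

lemma upRate_nonneg (M i : ℕ) : 0 ≤ upRate M i := by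
  unfold upRate; split
  · positivity
  · positivity

lemma gq_nonneg (N M : ℕ) (p : Fin (N + 1) × Fin (M + 1)) : 0 ≤ gq N M p := by
  unfold gq mq νq ηq σq μval
  have hμ : (0:ℝ) ≤ 1 / 2 + (p.2.val : ℝ) / (M : ℝ) := by positivity
  apply mul_nonneg
  · apply div_nonneg (by positivity)
    exact Finset.sum_nonneg fun k _ => by positivity
  · apply div_nonneg (pow_nonneg (upRate_nonneg M p.1.val) _)
    exact Finset.sum_nonneg fun k _ => pow_nonneg (upRate_nonneg M p.1.val) _


theorem stmt10 (N M : ℕ) (hN : 4 ≤ N) (hM : 2 ≤ M)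
    (i : Fin (N + 1)) (hi3 : 3 ≤ i.val) (hiN : i.val ≤ N - 1)
    (j : Fin (M + 1)) (hj1 : 1 ≤ j.val) (hjM : j.val ≤ M - 1) :
    ∑ s ∈ Finset.univ.erase (i, j),
        |Aq M s.1.val j s.2 * Qq N (μval M j.val) i s.1| * gq N M s ≥
      ((i.val : ℝ) - 1) * gq N M (⟨i.val - 1, by have := i.isLt; omega⟩, j) := by

  set s₀ : Fin (N + 1) × Fin (M + 1) := (⟨i.val - 1, by have := i.isLt; omega⟩, j) with hs₀
  have hmem : s₀ ∈ Finset.univ.erase (i, j) := by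
    refine Finset.mem_erase.mpr ⟨?_, Finset.mem_univ _⟩
    intro h
    have : (i.val - 1 : ℕ) = i.val := congrArg (fun p => p.1.val) h
    omega
  have hsum := Finset.single_le_sum
    (f := fun s => |Aq M s.1.val j s.2 * Qq N (μval M j.val) i s.1| * gq N M s)
    (fun s _ => mul_nonneg (abs_nonneg _) (gq_nonneg N M s)) hmem
  refine le_trans ?_ hsum
  have hA : Aq M s₀.1.val j s₀.2 = -(((i.val - 1 : ℕ) : ℝ) + 1) := by
    have h1 : ¬ (j.val = j.val + 1) := by omega
    have h2 : ¬ (j.val + 1 = j.val) := by omega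
    simp only [Aq, hs₀, h1, h2, if_false, if_pos rfl]
    have hjm : j.val < M := by omega
    have h0j : 0 < j.val := hj1
    rw [if_pos hjm, if_pos h0j]
    have : upRate M (i.val - 1) = ((i.val - 1 : ℕ) : ℝ) := by
      unfold upRate; rw [if_neg (by omega)]
    rw [this]; simp
  have hQ : Qq N (μval M j.val) i s₀.1 = 1 := by
    simp only [Qq, hs₀]
    rw [if_pos (by omega)]
  show ((i.val : ℝ) - 1) * gq N M s₀ ≤ |Aq M s₀.1.val j s₀.2 * Qq N (μval M j.val) i s₀.1| * gq N M s₀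
  rw [hA, hQ]
  have hcast : ((i.val - 1 : ℕ) : ℝ) = (i.val : ℝ) - 1 := by
    push_cast [Nat.cast_sub (by omega : 1 ≤ i.val)]; ring
  rw [mul_one, abs_neg, abs_of_nonneg (by positivity), hcast]
  have hg := gq_nonneg N M s₀
  nlinarith


end
end

section
/- In the queueing construction, for all integers M ≥ 2 and all 1 ≤ j ≤ M−1: (a) there is a constant C > 0 depending only on N such that Σ_{(i',μ_{j'}) ≠ (0,μ_j)} |A^0(μ_{j'}|μ_j)·Q^{μ_{j'}}(i'|0)|·g(0,μ_j) ≤ (C/M²)·(1/η(μ_j)); and (b) Σ_{(i',μ_{j'}) ≠ (0,μ_j)} |A^{i'}(μ_j|μ_{j'})·Q^{μ_j}(0|i')|·g(i',μ_{j'}) ≥ |A^1(μ_j|μ_{j−1})·Q^{μ_j}(0|1)|·g(1,μ_{j−1}) = μ_j / (μ_{j−1}·η(μ_{j−1})·(M+1)). -/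
noncomputable section

/-- The minimal choice `τ_ε(i,μ)`: the maximum of the two ratios in (12). -/
def τq (N M : ℕ) (p : Fin (N + 1) × Fin (M + 1)) : ℝ :=
  max
    ((∑ s ∈ Finset.univ.erase p,
        |Aq M s.1.val p.2 s.2 * Qq N (μval M p.2.val) p.1 s.1| * gq N M s) /
      (Aq M p.1.val p.2 p.2 * Qq N (μval M p.2.val) p.1 p.1 * gq N M p))
    ((∑ s ∈ Finset.univ.erase p,
        |Aq M p.1.val s.2 p.2 * Qq N (μval M s.2.val) s.1 p.1|) /
      (Aq M p.1.val p.2 p.2 * Qq N (μval M p.2.val) p.1 p.1))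

/-- The natural-space part of the combined generator:
`R_ε(i',μ'|i,μ) = |A^i(μ'|μ)·Q^{μ'}(i'|i)|` off the diagonal and
`R_ε(i,μ|i,μ) = −τ_ε(i,μ)·|A^i(μ|μ)·Q^μ(i|i)|`; `Rnat N M s p = R_ε(s|p)`. -/
def Rnat (N M : ℕ) (s p : Fin (N + 1) × Fin (M + 1)) : ℝ :=
  if s = p then -τq N M p * |Aq M p.1.val p.2 p.2 * Qq N (μval M p.2.val) p.1 p.1|
  else |Aq M p.1.val s.2 p.2 * Qq N (μval M s.2.val) s.1 p.1|

/-- Rate into the maintenance state: `R_ε(c_i|(i,μ)) = −Σ_{(i',μ')} R_ε(i',μ'|(i,μ))`. -/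
def RcIn (N M : ℕ) (p : Fin (N + 1) × Fin (M + 1)) : ℝ :=
  -∑ s : Fin (N + 1) × Fin (M + 1), Rnat N M s p

/-- Rate out of the maintenance state:
`R_ε((i,μ)|c_i) = −(1/ε)·Σ_{(i',μ')} R_ε((i,μ)|(i',μ'))·g(i',μ')`. -/
def RcOut (N M : ℕ) (ε : ℝ) (p : Fin (N + 1) × Fin (M + 1)) : ℝ :=
  -(1 / ε) * ∑ s : Fin (N + 1) × Fin (M + 1), Rnat N M p s * gq N M s

/-- The recursively defined pair `(V_r^{(j)}, V_c^{(j)})` with `j = N − t` (fuel `t`). -/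
def Vrc (N M : ℕ) (ε : ℝ) : ℕ → ℝ × ℝ
  | 0 =>
      (∑ μ : Fin (M + 1),
          RcIn N M (⟨N, Nat.lt_succ_self N⟩, μ) * gq N M (⟨N, Nat.lt_succ_self N⟩, μ),
        ε * ∑ μ : Fin (M + 1), RcOut N M ε (⟨N, Nat.lt_succ_self N⟩, μ))
  | t + 1 =>
      let v := Vrc N M ε t
      let j : Fin (N + 1) := ⟨N - (t + 1), by omega⟩
      ((∑ μ : Fin (M + 1), RcIn N M (j, μ) * gq N M (j, μ)) + max (v.1 - v.2) 0,
        ε * (∑ μ : Fin (M + 1), RcOut N M ε (j, μ)) + max (v.2 - v.1) 0)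

/-- `(V_r^{(j)}, V_c^{(j)})` for `1 ≤ j ≤ N`. -/
def Vj (N M : ℕ) (ε : ℝ) (j : ℕ) : ℝ × ℝ := Vrc N M ε (N - j)

/-- The combined generator `R_ε` of the multiple-maintenance-state construction on
`Ŷ = (X×Z) ⊕ {c_0,…,c_N}`; `Rhat N M ε s p = R_ε(s|p)`. -/
def Rhat (N M : ℕ) (ε : ℝ) :
    ((Fin (N + 1) × Fin (M + 1)) ⊕ Fin (N + 1)) →
      ((Fin (N + 1) × Fin (M + 1)) ⊕ Fin (N + 1)) → ℝ
  | Sum.inl s, Sum.inl p => Rnat N M s p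
  | Sum.inr a, Sum.inl p => if a = p.1 then RcIn N M p else 0
  | Sum.inl s, Sum.inr a => if a = s.1 then RcOut N M ε s else 0
  | Sum.inr a, Sum.inr b =>
      if a = b then
        if b.val = 0 then
          -((∑ μ : Fin (M + 1), RcOut N M ε (b, μ)) +
              max ((Vj N M ε 1).2 - (Vj N M ε 1).1) 0 / ε)
        else -(max (Vj N M ε b.val).1 (Vj N M ε b.val).2) / ε
      else if a.val = b.val + 1 then
        max ((Vj N M ε (b.val + 1)).2 - (Vj N M ε (b.val + 1)).1) 0 / ε
      else if a.val + 1 = b.val then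
        max ((Vj N M ε b.val).1 - (Vj N M ε b.val).2) 0 / ε
      else 0

/-- The target stationary measure on `Ŷ`: `g` on the natural space, `ε` on each `c_i`. -/
def ghat (N M : ℕ) (ε : ℝ) : ((Fin (N + 1) × Fin (M + 1)) ⊕ Fin (N + 1)) → ℝ :=
  Sum.elim (gq N M) fun _ => ε

lemma upRate_one (M : ℕ) : upRate M 1 = 1 := by simp [upRate]

lemma upRate_zero_eq (M : ℕ) : upRate M 0 = ((M : ℝ) ^ 2)⁻¹ := by simp [upRate]

lemma upRate_zero_le_one {M : ℕ} (hM : 1 ≤ M) : upRate M 0 ≤ 1 := by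
  simp only [upRate, if_true]
  exact inv_le_one_of_one_le₀ (one_le_pow₀ (by exact_mod_cast hM))

lemma μval_pos (M j : ℕ) : 0 < μval M j := by
  unfold μval; positivity

lemma ηq_pos (N : ℕ) {μ : ℝ} (hμ : 0 < μ) : 0 < ηq N μ :=
  Finset.sum_pos (fun _ _ => by positivity) Finset.nonempty_range_add_one

lemma one_le_σq (M i : ℕ) : 1 ≤ σq M i := by
  simpa [σq] using Finset.single_le_sum (f := fun k => upRate M i ^ k)
    (fun k _ => pow_nonneg (upRate_nonneg M i) k) (Finset.mem_range.mpr (Nat.succ_pos M))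

lemma σq_one (M : ℕ) : σq M 1 = M + 1 := by simp [σq, upRate_one]

lemma νq_le_pow (M i : ℕ) (j : Fin (M + 1)) : νq M i j ≤ upRate M i ^ j.val :=
  div_le_self (pow_nonneg (upRate_nonneg M i) _) (one_le_σq M i)

lemma gq_zero_le {N M : ℕ} (hM : 1 ≤ M) {j : Fin (M + 1)} (hj : 1 ≤ j.val) :
    gq N M (0, j) ≤ 1 / ηq N (μval M j) * upRate M 0 := by
  have hη := ηq_pos N (μval_pos M j)
  have hν : νq M 0 j ≤ upRate M 0 := (νq_le_pow M 0 j).trans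
    (pow_le_of_le_one (upRate_nonneg M 0) (upRate_zero_le_one hM) (by omega))
  simp only [gq, mq, Fin.val_zero, pow_zero]
  gcongr

lemma abs_Qq_col_zero {N : ℕ} (hN : 1 ≤ N) (μ : ℝ) (i' : Fin (N + 1)) :
    |Qq N μ i' 0| =
      (if i' = ⟨1, Nat.succ_lt_succ hN⟩ then 1 else 0) + (if i' = 0 then 1 else 0) := by
  unfold Qq
  simp only [Fin.ext_iff, Fin.val_zero]
  split_ifs <;> simp_all

lemma sum_abs_Qq_col_zero {N : ℕ} (hN : 1 ≤ N) (μ : ℝ) :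
    ∑ i' : Fin (N + 1), |Qq N μ i' 0| = 2 := by
  simp only [abs_Qq_col_zero hN, Finset.sum_add_distrib, Finset.sum_ite_eq', Finset.mem_univ,
    if_true]
  norm_num

lemma abs_Aq_of_interior (M i : ℕ) {j : Fin (M + 1)} (hj0 : 0 < j.val) (hjM : j.val < M)
    (j' : Fin (M + 1)) :
    |Aq M i j' j| = (if j' = ⟨j.val + 1, by omega⟩ then upRate M i else 0) +
      (if j' = ⟨j.val - 1, tsub_le_self.trans_lt j.isLt⟩ then 1 else 0) +
      (if j' = j then upRate M i + 1 else 0) := by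
  have hu := upRate_nonneg M i
  unfold Aq
  simp only [Fin.ext_iff, hj0, hjM, if_true]
  have hu1 : 0 ≤ upRate M i + 1 := by linarith
  split_ifs <;> simp only [abs_neg, abs_of_nonneg hu, abs_of_nonneg hu1, abs_one, abs_zero] <;>
    first | omega | ring

lemma sum_abs_Aq_of_interior (M i : ℕ) {j : Fin (M + 1)} (hj0 : 0 < j.val) (hjM : j.val < M) :
    ∑ j' : Fin (M + 1), |Aq M i j' j| = 2 * (upRate M i + 1) := by
  simp only [abs_Aq_of_interior M i hj0 hjM, Finset.sum_add_distrib, Finset.sum_ite_eq',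
    Finset.mem_univ, if_true]
  ring

lemma sum_abs_Aq_mul_Qq_col_zero {N M : ℕ} (hN : 1 ≤ N) (i : ℕ) (μ : Fin (M + 1) → ℝ)
    {j : Fin (M + 1)} (hj0 : 0 < j.val) (hjM : j.val < M) :
    ∑ s : Fin (N + 1) × Fin (M + 1), |Aq M i s.2 j * Qq N (μ s.2) s.1 0| =
      4 * (upRate M i + 1) := by
  rw [Fintype.sum_prod_type_right]
  simp only [abs_mul, ← Finset.mul_sum, sum_abs_Qq_col_zero hN, ← Finset.sum_mul,
    sum_abs_Aq_of_interior M i hj0 hjM]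
  ring

lemma outgoing_sum_le {N M : ℕ} (hN : 1 ≤ N) (hM : 2 ≤ M) {j : Fin (M + 1)}
    (hj0 : 1 ≤ j.val) (hjM : j.val ≤ M - 1) :
    ∑ s ∈ Finset.univ.erase ((0 : Fin (N + 1)), j),
        |Aq M 0 s.2 j * Qq N (μval M s.2.val) s.1 0| * gq N M (0, j) ≤
      5 / (M : ℝ) ^ 2 * (1 / ηq N (μval M j.val)) := by
  have hη := ηq_pos N (μval_pos M j)
  have hM4 : (4 : ℝ) ≤ (M : ℝ) ^ 2 := by
    have : (2 : ℝ) ≤ M := by exact_mod_cast hM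
    nlinarith
  calc _ ≤ ∑ s : Fin (N + 1) × Fin (M + 1),
          |Aq M 0 s.2 j * Qq N (μval M s.2.val) s.1 0| * gq N M (0, j) :=
        Finset.sum_le_univ_sum_of_nonneg fun s => mul_nonneg (abs_nonneg _) (gq_nonneg N M _)
    _ = 4 * (upRate M 0 + 1) * gq N M (0, j) := by
        rw [← Finset.sum_mul,
          sum_abs_Aq_mul_Qq_col_zero hN 0 (fun j' => μval M j') (by omega) (by omega)]
    _ ≤ 4 * (upRate M 0 + 1) * (1 / ηq N (μval M j.val) * upRate M 0) := by
        gcongr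
        · have := upRate_nonneg M 0; positivity
        · exact gq_zero_le (by omega) hj0
    _ ≤ 5 / (M : ℝ) ^ 2 * (1 / ηq N (μval M j.val)) := by
        have hx : ((M : ℝ) ^ 2)⁻¹ ≤ 4⁻¹ := inv_anti₀ (by norm_num) hM4
        rw [upRate_zero_eq]
        calc 4 * (((M : ℝ) ^ 2)⁻¹ + 1) * (1 / ηq N (μval M j.val) * ((M : ℝ) ^ 2)⁻¹)
            ≤ 5 * (1 / ηq N (μval M j.val) * ((M : ℝ) ^ 2)⁻¹) := by gcongr; linarith
          _ = 5 / (M : ℝ) ^ 2 * (1 / ηq N (μval M j.val)) := by ring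

lemma Aq_one_down {M : ℕ} {j : Fin (M + 1)} (hj : 1 ≤ j.val) :
    Aq M 1 j ⟨j.val - 1, tsub_le_self.trans_lt j.isLt⟩ = 1 := by
  rw [Aq, if_pos (by simp only; omega), upRate_one]

lemma Qq_zero_one {N : ℕ} (hN : 1 ≤ N) (μ : ℝ) :
    Qq N μ 0 ⟨1, Nat.succ_lt_succ hN⟩ = μ := by
  simp [Qq]

lemma gq_one (N M : ℕ) (hN : 1 ≤ N) (j : Fin (M + 1)) :
    gq N M (⟨1, Nat.succ_lt_succ hN⟩, j) =
      1 / (μval M j.val * ηq N (μval M j.val) * (M + 1)) := by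
  simp only [gq, mq, pow_one, νq, upRate_one, one_pow, σq_one, one_div, mul_inv_rev]
  ring

lemma incoming_term_eq {N M : ℕ} (hN : 1 ≤ N) {j : Fin (M + 1)} (hj : 1 ≤ j.val) :
    |Aq M 1 j ⟨j.val - 1, tsub_le_self.trans_lt j.isLt⟩ *
          Qq N (μval M j.val) 0 ⟨1, Nat.succ_lt_succ hN⟩| *
        gq N M (⟨1, Nat.succ_lt_succ hN⟩, ⟨j.val - 1, tsub_le_self.trans_lt j.isLt⟩) =
      μval M j.val / (μval M (j.val - 1) * ηq N (μval M (j.val - 1)) * ((M : ℝ) + 1)) := by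
  rw [Aq_one_down hj, Qq_zero_one hN, gq_one N M hN, one_mul, abs_of_pos (μval_pos M j),
    mul_one_div]

theorem stmt15 (N : ℕ) (hN : 1 ≤ N) :
    ∃ C : ℝ, 0 < C ∧ ∀ M : ℕ, 2 ≤ M → ∀ j : Fin (M + 1), 1 ≤ j.val → j.val ≤ M - 1 →
      ((∑ s ∈ Finset.univ.erase ((0 : Fin (N + 1)), j),
          |Aq M 0 s.2 j * Qq N (μval M s.2.val) s.1 (0 : Fin (N + 1))| *
            gq N M ((0 : Fin (N + 1)), j)) ≤
        C / (M : ℝ) ^ 2 * (1 / ηq N (μval M j.val))) ∧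
      ((∑ s ∈ Finset.univ.erase ((0 : Fin (N + 1)), j),
          |Aq M s.1.val j s.2 * Qq N (μval M j.val) (0 : Fin (N + 1)) s.1| * gq N M s) ≥
        |Aq M 1 j ⟨j.val - 1, by have := j.isLt; omega⟩ *
            Qq N (μval M j.val) (0 : Fin (N + 1)) ⟨1, by omega⟩| *
          gq N M (⟨1, by omega⟩, ⟨j.val - 1, by have := j.isLt; omega⟩)) ∧
      (|Aq M 1 j ⟨j.val - 1, by have := j.isLt; omega⟩ *
            Qq N (μval M j.val) (0 : Fin (N + 1)) ⟨1, by omega⟩| *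
          gq N M (⟨1, by omega⟩, ⟨j.val - 1, by have := j.isLt; omega⟩) =
        μval M j.val / (μval M (j.val - 1) * ηq N (μval M (j.val - 1)) * ((M : ℝ) + 1))) := by
  refine ⟨5, by norm_num, fun M hM j hj0 hjM => ⟨outgoing_sum_le hN hM hj0 hjM, ?_,
    incoming_term_eq hN hj0⟩⟩
  have hmem : ((⟨1, by omega⟩ : Fin (N + 1)), (⟨j.val - 1, by omega⟩ : Fin (M + 1))) ∈
      Finset.univ.erase ((0 : Fin (N + 1)), j) := by
    simp [Prod.ext_iff, Fin.ext_iff]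
  exact Finset.single_le_sum (f := fun s =>
      |Aq M s.1.val j s.2 * Qq N (μval M j.val) 0 s.1| * gq N M s)
    (fun s _ => mul_nonneg (abs_nonneg _) (gq_nonneg N M s)) hmem
end
end

section
/- In the multiple-maintenance-state construction, define τ₁^{(N)} = Σ_{0≤n≤M} Σ_{0≤j≤M} Σ_{0≤i≤N−1} |A^N(μ_j|μ_n)·Q^{μ_j}(i|N)|·g(N,μ_n) and τ₂^{(N)} = Σ_{0≤n≤M} Σ_{0≤j≤M} Σ_{0≤i≤N−1} |A^i(μ_j|μ_n)·Q^{μ_j}(N|i)|·g(i,μ_n). Then V_r^{(N)} − V_c^{(N)} = τ₂^{(N)} − τ₁^{(N)}, where V_r^{(N)} = Σ_{μ∈Z} R_ε(c_N|(N,μ))·g(N,μ) and V_c^{(N)} = ε·Σ_{μ∈Z} R_ε((N,μ)|c_N). In particular max[R_ε(c_N|c_{N−1}), R_ε(c_{N−1}|c_N)] = |τ₁^{(N)} − τ₂^{(N)}|/ε. -/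
noncomputable section

/-! `V_r^{(N)} − V_c^{(N)}` is the net `g`-weighted flow into the top level `{N} × Z`. In the
double sums the transitions inside that level appear once as inflow and once as outflow and
cancel, so only the transitions between level `N` and the lower levels survive: these are
`τ₂` (in) and `τ₁` (out). The two rates between `c_N` and `c_{N−1}` are the positive and
negative parts of `V_r^{(N)} − V_c^{(N)}` divided by `ε`, so their maximum is `|τ₁ − τ₂| / ε`. -/

open Finset

theorem sum_sum_sub_sum_sum_eq_sum_erase {X Z β : Type*} [Fintype X] [DecidableEq X]
    [Fintype Z] [AddCommGroup β] (x₀ : X) (F : X × Z → X × Z → β) :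
    ∑ z, ∑ s, F (x₀, z) s - ∑ z, ∑ s, F s (x₀, z) =
      ∑ z, ∑ z', ∑ x ∈ univ.erase x₀, (F (x₀, z) (x, z') - F (x, z') (x₀, z)) := by
  have split : ∀ f : X → β, ∑ x, f x = f x₀ + ∑ x ∈ univ.erase x₀, f x := fun f =>
    (add_sum_erase _ f (mem_univ x₀)).symm
  simp only [Fintype.sum_prod_type, split, sum_add_distrib, sum_sub_distrib]
  -- the terms inside the level `x₀` cancel once `z` and `z'` are exchanged
  rw [sum_comm (f := fun z z' => F (x₀, z') (x₀, z))]
  simp only [sum_comm (s := (univ : Finset Z)) (t := univ.erase x₀)]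
  abel

theorem Fin.univ_filter_val_lt_eq_erase_last (N : ℕ) :
    univ.filter (fun i : Fin (N + 1) => i.val < N) = univ.erase (Fin.last N) := by
  ext i
  simp [Fin.ext_iff, Nat.lt_iff_le_and_ne, Fin.is_le]

theorem abs_div_eq_max_max_neg_zero_div {𝕜 : Type*} [Field 𝕜] [LinearOrder 𝕜]
    [IsStrictOrderedRing 𝕜] {ε : 𝕜} (hε : 0 < ε) (x : 𝕜) :
    max (max (-x) 0 / ε) (max x 0 / ε) = |x| / ε := by
  rw [max_div_div_right hε.le]
  congr 1
  rcases le_total 0 x with hx | hx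
  · simp [hx, abs_of_nonneg hx]
  · simp [hx, abs_of_nonpos hx]

def outflowTop (N M : ℕ) : ℝ :=
  ∑ n : Fin (M + 1), ∑ j : Fin (M + 1), ∑ i ∈ univ.filter (fun i : Fin (N + 1) => i.val < N),
    |Aq M N j n * Qq N (μval M j.val) i (Fin.last N)| * gq N M (Fin.last N, n)

def inflowTop (N M : ℕ) : ℝ :=
  ∑ n : Fin (M + 1), ∑ j : Fin (M + 1), ∑ i ∈ univ.filter (fun i : Fin (N + 1) => i.val < N),
    |Aq M i.val j n * Qq N (μval M j.val) (Fin.last N) i| * gq N M (i, n)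

theorem Rnat_of_ne {N M : ℕ} {s p : Fin (N + 1) × Fin (M + 1)} (h : s ≠ p) :
    Rnat N M s p = |Aq M p.1.val s.2 p.2 * Qq N (μval M s.2.val) s.1 p.1| :=
  if_neg h

theorem Vj_self_fst (N M : ℕ) (ε : ℝ) :
    (Vj N M ε N).1 = -∑ z, ∑ s, Rnat N M s (Fin.last N, z) * gq N M (Fin.last N, z) := by
  simp only [Vj, Nat.sub_self, Vrc, RcIn, neg_mul, sum_neg_distrib, sum_mul]
  rfl

theorem Vj_self_snd (N M : ℕ) {ε : ℝ} (hε : ε ≠ 0) :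
    (Vj N M ε N).2 = -∑ z, ∑ s, Rnat N M (Fin.last N, z) s * gq N M s := by
  simp only [Vj, Nat.sub_self, Vrc, RcOut, ← mul_sum]
  field_simp
  rfl

theorem Vj_self_fst_sub_snd (N M : ℕ) {ε : ℝ} (hε : ε ≠ 0) :
    (Vj N M ε N).1 - (Vj N M ε N).2 = inflowTop N M - outflowTop N M := by
  rw [Vj_self_fst, Vj_self_snd N M hε, neg_sub_neg,
    sum_sum_sub_sum_sum_eq_sum_erase (Fin.last N) (fun p s => Rnat N M p s * gq N M s)]
  have off_top : ∀ z z', ∀ x ∈ univ.erase (Fin.last N),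
      ((x, z') : Fin (N + 1) × Fin (M + 1)) ≠ (Fin.last N, z) := fun _ _ x hx h =>
    ne_of_mem_erase hx (congrArg Prod.fst h)
  simp only [sum_sub_distrib, inflowTop, outflowTop, Fin.univ_filter_val_lt_eq_erase_last]
  congr 1
  · rw [sum_comm]
    refine sum_congr rfl fun z' _ => sum_congr rfl fun z _ => sum_congr rfl fun x hx => ?_
    rw [Rnat_of_ne (off_top z z' x hx).symm]
  · refine sum_congr rfl fun z _ => sum_congr rfl fun z' _ => sum_congr rfl fun x hx => ?_
    rw [Rnat_of_ne (off_top z z' x hx)]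
    rfl

theorem Rhat_last_pred (N M : ℕ) (ε : ℝ) (hN : 1 ≤ N) :
    Rhat N M ε (Sum.inr (Fin.last N)) (Sum.inr ⟨N - 1, by omega⟩) =
      max ((Vj N M ε N).2 - (Vj N M ε N).1) 0 / ε := by
  simp only [Rhat, Fin.ext_iff, Fin.val_last]
  rw [if_neg (by omega), if_pos (by omega), Nat.sub_add_cancel hN]

theorem Rhat_pred_last (N M : ℕ) (ε : ℝ) (hN : 1 ≤ N) :
    Rhat N M ε (Sum.inr ⟨N - 1, by omega⟩) (Sum.inr (Fin.last N)) =
      max ((Vj N M ε N).1 - (Vj N M ε N).2) 0 / ε := by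
  simp only [Rhat, Fin.ext_iff, Fin.val_last]
  rw [if_neg (by omega), if_neg (by omega), if_pos (by omega)]

theorem stmt19 (N M : ℕ) (hN : 2 ≤ N) (ε : ℝ) (hε : 0 < ε) :
    let cN : Fin (N + 1) := ⟨N, by omega⟩
    let τ₁ : ℝ := ∑ n : Fin (M + 1), ∑ j : Fin (M + 1),
      ∑ i ∈ Finset.univ.filter (fun i : Fin (N + 1) => i.val < N),
        |Aq M N j n * Qq N (μval M j.val) i cN| * gq N M (cN, n)
    let τ₂ : ℝ := ∑ n : Fin (M + 1), ∑ j : Fin (M + 1),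
      ∑ i ∈ Finset.univ.filter (fun i : Fin (N + 1) => i.val < N),
        |Aq M i.val j n * Qq N (μval M j.val) cN i| * gq N M (i, n)
    ((Vj N M ε N).1 - (Vj N M ε N).2 = τ₂ - τ₁) ∧
    max (Rhat N M ε (Sum.inr cN) (Sum.inr ⟨N - 1, by omega⟩))
        (Rhat N M ε (Sum.inr ⟨N - 1, by omega⟩) (Sum.inr cN)) = |τ₁ - τ₂| / ε := by
  intro cN τ₁ τ₂
  have flux : (Vj N M ε N).1 - (Vj N M ε N).2 = τ₂ - τ₁ := Vj_self_fst_sub_snd N M hε.ne'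
  refine ⟨flux, ?_⟩
  rw [show cN = Fin.last N from rfl, Rhat_last_pred N M ε (by omega),
    Rhat_pred_last N M ε (by omega),
    ← neg_sub (Vj N M ε N).1, flux, abs_sub_comm]
  exact abs_div_eq_max_max_neg_zero_div hε _

end
end
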